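/- Let U ⊆ ℝ² be open and let u : U → ℝ be a smooth solution of Liouville's equation u_{tx} + e^u = 0 on U. Let W ⊆ ℝ² be an open set containing {(x, u_x(t,x)) : (t,x) ∈ U} and let h : W → ℝ be smooth with u_{xx}(t,x) = h(x, u_x(t,x)) for all (t,x) ∈ U. Then ∂₂h(x, u_x(t,x)) = u_x(t,x) for all (t,x) ∈ U; i.e., h satisfies the quotient equation h_J − J = 0 along the solution. -/

import Mathlib

open Real

/-- Partial derivative of a function of two real variables w.r.t. its first argument. -/
noncomputable def d1 (f : ℝ → ℝ → ℝ) (a b : ℝ) : ℝ := deriv (fun s => f s b) a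

/-- Partial derivative of a function of two real variables w.r.t. its second argument. -/
noncomputable def d2 (f : ℝ → ℝ → ℝ) (a b : ℝ) : ℝ := deriv (fun s => f a s) b

/-- A function of two real variables is smooth (infinitely differentiable). -/
def Smooth2 (f : ℝ → ℝ → ℝ) : Prop := ContDiff ℝ (⊤ : ℕ∞) (fun p : ℝ × ℝ => f p.1 p.2)

/-- A function of two real variables is smooth on a set `U ⊆ ℝ²`. -/
def Smooth2On (f : ℝ → ℝ → ℝ) (U : Set (ℝ × ℝ)) : Prop :=
  ContDiffOn ℝ (⊤ : ℕ∞) (fun p : ℝ × ℝ => f p.1 p.2) U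

/-! Write `v = u_x`. Differentiating `v_x = h(x, v)` in `t` gives `v_{xt} = h_J(x, v) v_t`, while
differentiating the equation `v_t = -e^u` in `x` gives `v_{tx} = -e^u u_x`. By Schwarz's theorem the two
mixed derivatives agree, so `-h_J(x, u_x) e^u = -u_x e^u`, and `e^u ≠ 0`. -/

open Function

section Slices

variable {E : Type*} [NormedAddCommGroup E] [NormedSpace ℝ E] {F : ℝ × ℝ → E} {a b : ℝ}

theorem DifferentiableAt.hasDerivAt_fst_slice (hF : DifferentiableAt ℝ F (a, b)) :
    HasDerivAt (fun s => F (s, b)) (fderiv ℝ F (a, b) (1, 0)) a :=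
  hF.hasFDerivAt.comp_hasDerivAt a ((hasDerivAt_id a).prodMk (hasDerivAt_const a b))

theorem DifferentiableAt.hasDerivAt_snd_slice (hF : DifferentiableAt ℝ F (a, b)) :
    HasDerivAt (fun s => F (a, s)) (fderiv ℝ F (a, b) (0, 1)) b :=
  hF.hasFDerivAt.comp_hasDerivAt b ((hasDerivAt_const b a).prodMk (hasDerivAt_id b))

end Slices

section Congr

variable {f g : ℝ → ℝ → ℝ} {U : Set (ℝ × ℝ)} {a b : ℝ}

theorem d1_congr_of_eqOn (hU : IsOpen U) (hfg : ∀ p ∈ U, f p.1 p.2 = g p.1 p.2)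
    (hab : (a, b) ∈ U) : d1 f a b = d1 g a b := by
  have hslice : ∀ᶠ s in nhds a, (s, b) ∈ U :=
    (Continuous.prodMk_left b).continuousAt.preimage_mem_nhds (hU.mem_nhds hab)
  exact Filter.EventuallyEq.deriv_eq (hslice.mono fun s hs => hfg (s, b) hs)

theorem d2_congr_of_eqOn (hU : IsOpen U) (hfg : ∀ p ∈ U, f p.1 p.2 = g p.1 p.2)
    (hab : (a, b) ∈ U) : d2 f a b = d2 g a b := by
  have hslice : ∀ᶠ s in nhds b, (a, s) ∈ U :=
    (Continuous.prodMk_right a).continuousAt.preimage_mem_nhds (hU.mem_nhds hab)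
  exact Filter.EventuallyEq.deriv_eq (hslice.mono fun s hs => hfg (a, s) hs)

end Congr

namespace Smooth2On

variable {f : ℝ → ℝ → ℝ} {U : Set (ℝ × ℝ)} {a b : ℝ}

theorem contDiffAt (hf : Smooth2On f U) (hU : IsOpen U) {p : ℝ × ℝ} (hp : p ∈ U) :
    ContDiffAt ℝ (⊤ : ℕ∞) (uncurry f) p :=
  (hf p hp).contDiffAt (hU.mem_nhds hp)

theorem differentiableAt (hf : Smooth2On f U) (hU : IsOpen U) {p : ℝ × ℝ} (hp : p ∈ U) :
    DifferentiableAt ℝ (uncurry f) p :=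
  (hf.contDiffAt hU hp).differentiableAt (by simp)

theorem d1_eq_fderiv (hf : Smooth2On f U) (hU : IsOpen U) (hab : (a, b) ∈ U) :
    d1 f a b = fderiv ℝ (uncurry f) (a, b) (1, 0) :=
  (hf.differentiableAt hU hab).hasDerivAt_fst_slice.deriv

theorem d2_eq_fderiv (hf : Smooth2On f U) (hU : IsOpen U) (hab : (a, b) ∈ U) :
    d2 f a b = fderiv ℝ (uncurry f) (a, b) (0, 1) :=
  (hf.differentiableAt hU hab).hasDerivAt_snd_slice.deriv

theorem hasDerivAt_d1 (hf : Smooth2On f U) (hU : IsOpen U) (hab : (a, b) ∈ U) :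
    HasDerivAt (fun s => f s b) (d1 f a b) a :=
  hf.d1_eq_fderiv hU hab ▸ (hf.differentiableAt hU hab).hasDerivAt_fst_slice

theorem hasDerivAt_d2 (hf : Smooth2On f U) (hU : IsOpen U) (hab : (a, b) ∈ U) :
    HasDerivAt (fun s => f a s) (d2 f a b) b :=
  hf.d2_eq_fderiv hU hab ▸ (hf.differentiableAt hU hab).hasDerivAt_snd_slice

theorem d2_of_isOpen (hf : Smooth2On f U) (hU : IsOpen U) : Smooth2On (d2 f) U := by
  have hfderiv : ContDiffOn ℝ (⊤ : ℕ∞) (fun p => fderiv ℝ (uncurry f) p (0, 1)) U :=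
    (ContDiffOn.fderiv_of_isOpen hf hU (by simp)).clm_apply
      contDiffOn_const
  exact hfderiv.congr fun p hp => hf.d2_eq_fderiv hU hp

theorem d1_d2_comm (hf : Smooth2On f U) (hU : IsOpen U) (hab : (a, b) ∈ U) :
    d1 (d2 f) a b = d2 (d1 f) a b := by
  have hdiff : DifferentiableAt ℝ (fderiv ℝ (uncurry f)) (a, b) :=
    ((hf.contDiffAt hU hab).fderiv_right (m := (⊤ : ℕ∞))
      (by simp)).differentiableAt (by simp)
  have hsymm : IsSymmSndFDerivAt ℝ (uncurry f) (a, b) :=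
    (hf.contDiffAt hU hab).isSymmSndFDerivAt (by
      simp only [minSmoothness_of_isRCLikeNormedField]; norm_cast)
  calc d1 (d2 f) a b = d1 (fun s t => fderiv ℝ (uncurry f) (s, t) (0, 1)) a b :=
        d1_congr_of_eqOn hU (fun p hp => hf.d2_eq_fderiv hU hp) hab
    _ = fderiv ℝ (fderiv ℝ (uncurry f)) (a, b) (1, 0) (0, 1) :=
        ((ContinuousLinearMap.apply ℝ ℝ ((0 : ℝ), (1 : ℝ))).hasFDerivAt.comp_hasDerivAt a
          hdiff.hasDerivAt_fst_slice).deriv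
    _ = fderiv ℝ (fderiv ℝ (uncurry f)) (a, b) (0, 1) (1, 0) := hsymm _ _
    _ = d2 (fun s t => fderiv ℝ (uncurry f) (s, t) (1, 0)) a b :=
        ((ContinuousLinearMap.apply ℝ ℝ ((1 : ℝ), (0 : ℝ))).hasFDerivAt.comp_hasDerivAt b
          hdiff.hasDerivAt_snd_slice).deriv.symm
    _ = d2 (d1 f) a b :=
        (d2_congr_of_eqOn hU (fun p hp => hf.d1_eq_fderiv hU hp) hab).symm

end Smooth2On

/-- Quotient of Liouville's equation `u_{tx} + e^u = 0`: along a solution, a smooth `h`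
with `u_{xx} = h(x, u_x)` satisfies `h_J = J` at `(I,J) = (x, u_x)`. -/
theorem liouville_quotient
    (U : Set (ℝ × ℝ)) (hU : IsOpen U)
    (u : ℝ → ℝ → ℝ) (hu : Smooth2On u U)
    (hsol : ∀ p ∈ U, d1 (d2 u) p.1 p.2 + Real.exp (u p.1 p.2) = 0)
    (W : Set (ℝ × ℝ)) (hW : IsOpen W)
    (hWsub : ∀ p ∈ U, (p.2, d2 u p.1 p.2) ∈ W)
    (h : ℝ → ℝ → ℝ) (hh : Smooth2On h W)
    (hcon : ∀ p ∈ U, d2 (d2 u) p.1 p.2 = h p.2 (d2 u p.1 p.2)) :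
    ∀ p ∈ U, d2 h p.2 (d2 u p.1 p.2) = d2 u p.1 p.2 := by
  rintro ⟨t, x⟩ hp
  have hv : Smooth2On (d2 u) U := hu.d2_of_isOpen hU
  have hut : ∀ q ∈ U, d1 (d2 u) q.1 q.2 = -exp (u q.1 q.2) := fun q hq =>
    eq_neg_of_add_eq_zero_left (hsol q hq)
  have hd_t : d1 (d2 (d2 u)) t x = d2 h x (d2 u t x) * d1 (d2 u) t x := by
    rw [d1_congr_of_eqOn (g := fun t x => h x (d2 u t x)) hU hcon hp]
    exact ((hh.hasDerivAt_d2 hW (hWsub _ hp)).comp t (hv.hasDerivAt_d1 hU hp)).deriv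
  have hd_x : d2 (d1 (d2 u)) t x = -(exp (u t x) * d2 u t x) := by
    rw [d2_congr_of_eqOn (g := fun t x => -exp (u t x)) hU hut hp]
    exact (hu.hasDerivAt_d2 hU hp).exp.neg.deriv
  refine mul_right_cancel₀ (exp_ne_zero (u t x)) ?_
  linear_combination hd_t - hv.d1_d2_comm hU hp - hd_x + d2 h x (d2 u t x) * hut _ hp
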